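/- Let e be a 3×3 real matrix and b = I + 2·e, and write I₁(A) = trace(A), I₂(A) = (1/2)·((trace A)² − trace(A·A)). Then I₁(b)·b − b·b − (2/3)·I₂(b)·I = 2·(I₁(e)·I − e)·b + 4·(e − (2/3)·I₁(e)·I − (2/3)·I₂(e)·I). -/

import Mathlib

/-! The invariants of `b = 1 + 2e` are affine in those of `e`: `I₁(b) = 3 + 2 I₁(e)` and
`I₂(b) = 3 + 4 I₁(e) + 4 I₂(e)`. Substituting them, both sides become polynomials in `e` with scalar
coefficients in `I₁(e)` and `I₂(e)`, and they agree as such. -/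

namespace Matrix

variable {n 𝕜 : Type*} [Fintype n] [DecidableEq n]

def secondInvariant [Field 𝕜] (A : Matrix n n 𝕜) : 𝕜 := 1 / 2 * (trace A ^ 2 - trace (A * A))

theorem trace_one_add_smul [CommRing 𝕜] (c : 𝕜) (e : Matrix n n 𝕜) :
    trace (1 + c • e) = Fintype.card n + c * trace e := by
  rw [trace_add, trace_one, trace_smul, smul_eq_mul]

theorem secondInvariant_one_add_smul [Field 𝕜] [NeZero (2 : 𝕜)] (c : 𝕜) (e : Matrix n n 𝕜) :
    secondInvariant (1 + c • e) =
      ((Fintype.card n : 𝕜) ^ 2 - Fintype.card n) / 2 + c * (Fintype.card n - 1) * trace e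
        + c ^ 2 * secondInvariant e := by
  have hsq : (1 + c • e) * (1 + c • e) = 1 + (2 * c) • e + c ^ 2 • (e * e) := by
    simp only [mul_add, add_mul, one_mul, mul_one, smul_mul_smul_comm]
    module
  simp only [secondInvariant, hsq, trace_add, trace_one, trace_smul, smul_eq_mul]
  field_simp
  ring

end Matrix

theorem stmt_14 (e b : Matrix (Fin 3) (Fin 3) ℝ)
    (hb : b = 1 + (2 : ℝ) • e)
    (I₁ I₂ : Matrix (Fin 3) (Fin 3) ℝ → ℝ)
    (hI₁ : ∀ A, I₁ A = Matrix.trace A)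
    (hI₂ : ∀ A, I₂ A = (1 / 2 : ℝ) * ((Matrix.trace A) ^ 2 - Matrix.trace (A * A))) :
    I₁ b • b - b * b - (2 / 3 * I₂ b) • (1 : Matrix (Fin 3) (Fin 3) ℝ)
      = (2 : ℝ) • ((I₁ e • (1 : Matrix (Fin 3) (Fin 3) ℝ) - e) * b)
        + (4 : ℝ) • (e - (2 / 3 * I₁ e) • (1 : Matrix (Fin 3) (Fin 3) ℝ)
            - (2 / 3 * I₂ e) • (1 : Matrix (Fin 3) (Fin 3) ℝ)) := by
  obtain rfl : I₁ = Matrix.trace := funext hI₁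
  obtain rfl : I₂ = Matrix.secondInvariant := funext hI₂
  subst hb
  rw [Matrix.trace_one_add_smul, Matrix.secondInvariant_one_add_smul, Fintype.card_fin]
  simp only [mul_add, add_mul, mul_sub, sub_mul, one_mul, mul_one, smul_mul_assoc, mul_smul_comm]
  module
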